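/- arXiv:2603.17862 — 3 statements merged into one kernel-verified Lean document; each statement's English description precedes it below -/
import Mathlib

section
/- If (x, p, α) is a d-dimensional lexicographic dividend equilibrium for the economy (u, ω) with simple prices satisfying both the weak cheapest bundle property and the aggregate cheapest bundle property, then there exist a price matrix q ∈ ℝ^{d×n} and a dividend matrix γ ∈ ℝ^{d×n} with γ ≥ 0 such that (x, q, γ) is a d-dimensional lexicographic dividend equilibrium for (u, ω) satisfying the strong cheapest bundle property; in particular LDE₋(u, ω) ⊆ LDE₊(u, ω). -/
/-!
Simple prices with positive leading entries are nonnegative. Level by level we add to `p k` a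
nonnegative correction supported on the goods that already have a positive price at some lower
level, such that every bundle an agent weakly prefers to her allocation and that costs as much
as it at the corrected lower levels costs at least as much at level `k`. By Farkas' lemma such
a correction exists unless a nonnegative combination of scaled deviations of this kind, which
keeps the corrected lower-level costs and does not raise the aggregate demand for lower-priced
goods, is cheaper at level `k`; the aggregate cheapest bundle property rules this out. The
corrected prices have the strong cheapest bundle property, and they still support `x`: an agent
with no income below her level `k_i` neither owns nor consumes goods priced below `k_i`, so the
corrections of the levels up to `k_i` leave her incomes and `k_i` unchanged and only make
bundles more expensive.
-/

open Finset

/-- Dot product of two vectors in `ℝⁿ`. -/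
def dotp {n : ℕ} (a b : Fin n → ℝ) : ℝ := ∑ j, a j * b j

/-- Membership in `Δⁿ₋`: nonnegative with coordinate sum at most 1. -/
def InSimplexLe {n : ℕ} (y : Fin n → ℝ) : Prop := (∀ j, 0 ≤ y j) ∧ ∑ j, y j ≤ 1

/-- The set `M` of allocations: nonnegative doubly stochastic matrices. -/
def IsAlloc {n : ℕ} (x : Fin n → Fin n → ℝ) : Prop :=
  (∀ i j, 0 ≤ x i j) ∧ (∀ i, ∑ j, x i j = 1) ∧ (∀ j, ∑ i, x i j = 1)

/-- `k_i` (0-based): the first currency in which agent `i` has positive income,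
or the last currency `d - 1` if there is none. -/
noncomputable def kIdx {n : ℕ} (d : ℕ) (p α : ℕ → Fin n → ℝ)
    (ω : Fin n → Fin n → ℝ) (i : Fin n) : ℕ :=
  sInf ({k | k < d ∧ 0 < dotp (p k) (ω i) + α k i} ∪ {d - 1})

/-- The budget set `C^α_i(p)`. -/
def BudgetSet {n : ℕ} (d : ℕ) (p α : ℕ → Fin n → ℝ)
    (ω : Fin n → Fin n → ℝ) (i : Fin n) : Set (Fin n → ℝ) :=
  {y | InSimplexLe y ∧
    ∀ k ≤ kIdx d p α ω i, dotp (p k) y ≤ dotp (p k) (ω i) + α k i}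

/-- `(x, p, α)` is a `d`-dimensional lexicographic dividend equilibrium for `(u, ω)`.
Currencies are indexed 0-based by `k < d`. -/
def IsLDE {n : ℕ} (u ω : Fin n → Fin n → ℝ) (d : ℕ)
    (x : Fin n → Fin n → ℝ) (p α : ℕ → Fin n → ℝ) : Prop :=
  IsAlloc x ∧
  (∀ k, k < d → ∀ i, 0 ≤ α k i) ∧
  (∀ (j : Fin n) (k : ℕ), k < d → p k j ≠ 0 → (∀ l < k, p l j = 0) → 0 < p k j) ∧
  (∀ (i : Fin n) (k : ℕ), k < d →
    α k i = max (dotp (p k) (fun j => x i j - ω i j)) 0) ∧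
  (∀ (i : Fin n), ∀ y ∈ BudgetSet d p α ω i, dotp (u i) y ≤ dotp (u i) (x i))

/-- The strong cheapest bundle property. -/
def StrongCB {n : ℕ} (u : Fin n → Fin n → ℝ) (d : ℕ)
    (x : Fin n → Fin n → ℝ) (p : ℕ → Fin n → ℝ) : Prop :=
  ¬ ∃ (i : Fin n) (y : Fin n → ℝ) (k : ℕ),
      InSimplexLe y ∧ dotp (u i) (x i) ≤ dotp (u i) y ∧ k < d ∧
      (∀ l < k, dotp (p l) y = dotp (p l) (x i)) ∧
      dotp (p k) y < dotp (p k) (x i)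

/-- Simple prices: every column of `p` has at most one nonzero entry. -/
def SimplePrices {n : ℕ} (d : ℕ) (p : ℕ → Fin n → ℝ) : Prop :=
  ∀ (j : Fin n) (k l : ℕ), k < d → l < d → p k j ≠ 0 → p l j ≠ 0 → k = l

/-- The weak cheapest bundle property. -/
def WeakCB {n : ℕ} (u ω : Fin n → Fin n → ℝ) (d : ℕ)
    (x : Fin n → Fin n → ℝ) (p α : ℕ → Fin n → ℝ) : Prop :=
  ¬ ∃ (i : Fin n) (y : Fin n → ℝ) (k : ℕ),
      InSimplexLe y ∧ dotp (u i) (x i) ≤ dotp (u i) y ∧ k ≤ kIdx d p α ω i ∧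
      (∀ l < k, dotp (p l) y = dotp (p l) (x i)) ∧
      dotp (p k) y < dotp (p k) (x i)

/-- The aggregate cheapest bundle property. -/
def AggCB {n : ℕ} (u : Fin n → Fin n → ℝ) (d : ℕ)
    (x : Fin n → Fin n → ℝ) (p : ℕ → Fin n → ℝ) : Prop :=
  ¬ ∃ (β : Fin n → ℝ) (y : Fin n → Fin n → ℝ) (k : ℕ),
      (∀ i, 0 ≤ β i) ∧ (∀ i, InSimplexLe (y i)) ∧ k < d ∧
      (∀ i, 0 < β i → dotp (u i) (x i) ≤ dotp (u i) (y i)) ∧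
      (∀ l < k, dotp (p l) (fun j => ∑ i, β i * y i j)
        = dotp (p l) (fun j => ∑ i, β i * x i j)) ∧
      dotp (p k) (fun j => ∑ i, β i * y i j)
        < dotp (p k) (fun j => ∑ i, β i * x i j) ∧
      (∀ j : Fin n, (∃ l < k, 0 < p l j) →
        (∑ i, β i * y i j) ≤ ∑ i, β i * x i j)

open Matrix

namespace PointedCone

variable {E : Type*} [AddCommGroup E] [Module ℝ E]

lemma exists_nonneg_repr_with_zero_of_sum_smul_eq_zero {ι : Type*} [Fintype ι] {A : ι → E}
    {g : ι → ℝ} (hg : ∑ t, g t • A t = 0) (hne : ∃ t, g t ≠ 0) {μ : ι → ℝ} (hμ : 0 ≤ μ) :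
    ∃ (t₀ : ι) (ν : ι → ℝ), 0 ≤ ν ∧ ν t₀ = 0 ∧ ∑ t, ν t • A t = ∑ t, μ t • A t := by
  wlog hpos : ∃ t, 0 < g t generalizing g
  · obtain ⟨t, ht⟩ := hne
    refine this (g := -g) (by simp [hg]) ⟨t, by simpa⟩ ⟨t, ?_⟩
    simp only [not_exists, not_lt] at hpos
    simpa using lt_of_le_of_ne (hpos t) ht
  obtain ⟨t₀, ht₀, hmin⟩ := (univ.filter (0 < g ·)).exists_min_image (fun t => μ t / g t)
    (by simpa [Finset.Nonempty] using hpos)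
  replace ht₀ : 0 < g t₀ := by simpa using ht₀
  refine ⟨t₀, μ - (μ t₀ / g t₀) • g, fun t => ?_, by simp [div_mul_cancel₀ _ ht₀.ne'], ?_⟩
  · simp only [Pi.zero_apply, Pi.sub_apply, Pi.smul_apply, smul_eq_mul, sub_nonneg]
    rcases lt_or_ge 0 (g t) with hgt | hgt
    · have := hmin t (by simpa using hgt)
      rwa [div_le_div_iff₀ ht₀ hgt, ← div_le_iff₀ ht₀, ← div_mul_eq_mul_div] at this
    · exact (mul_nonpos_of_nonneg_of_nonpos (div_nonneg (hμ t₀) ht₀.le) hgt).trans (hμ t)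
  · simp [sub_smul, sum_sub_distrib, mul_smul, ← smul_sum, hg]

lemma mem_hull_finset_iff {s : Finset E} {x : E} :
    x ∈ hull ℝ (s : Set E) ↔ ∃ μ : s → ℝ, 0 ≤ μ ∧ ∑ a, μ a • (a : E) = x := by
  rw [Submodule.mem_span_finset']
  constructor
  · rintro ⟨f, rfl⟩
    exact ⟨fun a => f a, fun a => (f a).2, by simp [Nonneg.coe_smul]⟩
  · rintro ⟨μ, hμ, rfl⟩
    exact ⟨fun a => ⟨μ a, hμ a⟩, by simp [Nonneg.mk_smul]⟩

variable [TopologicalSpace E] [IsTopologicalAddGroup E] [ContinuousSMul ℝ E] [T2Space E]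

/-- A cone spanned by linearly independent vectors is a closed embedded orthant; a dependent
generating set can be thinned out by `exists_nonneg_repr_with_zero_of_sum_smul_eq_zero`. -/
theorem isClosed_hull_finset (s : Finset E) : IsClosed (hull ℝ (s : Set E) : Set E) := by
  classical
  induction s using Finset.strongInduction with | H s ih =>
  by_cases hs : LinearIndependent ℝ (Subtype.val : s → E)
  · have hL : LinearMap.ker (Fintype.linearCombination ℝ (Subtype.val : s → E)) = ⊥ :=
      LinearMap.ker_eq_bot.mpr (linearIndependent_iff_injective_fintypeLinearCombination.mp hs)
    have : (hull ℝ (s : Set E) : Set E) =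
        Fintype.linearCombination ℝ (Subtype.val : s → E) '' Set.Ici 0 := by
      ext x
      simp [mem_hull_finset_iff, Fintype.linearCombination_apply]
    rw [this]
    exact (LinearMap.isClosedEmbedding_of_injective hL).isClosedMap _ isClosed_Ici
  · obtain ⟨g, hg, hne⟩ := Fintype.not_linearIndependent_iff.mp hs
    have : (hull ℝ (s : Set E) : Set E) = ⋃ a ∈ s, (hull ℝ ((s.erase a : Finset E) : Set E)) := by
      refine subset_antisymm (fun x hx => ?_)
        (Set.iUnion₂_subset fun a _ => Submodule.span_mono (by simp))
      obtain ⟨μ, hμ, rfl⟩ := mem_hull_finset_iff.mp hx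
      obtain ⟨t₀, ν, hν, hνt₀, hsum⟩ :=
        exists_nonneg_repr_with_zero_of_sum_smul_eq_zero hg hne hμ
      refine Set.mem_biUnion t₀.2 ?_
      rw [← hsum]
      refine Submodule.sum_mem _ fun a _ => ?_
      by_cases ha : a = t₀
      · simp [ha, hνt₀]
      · rw [← Nonneg.mk_smul _ (hν a)]
        exact Submodule.smul_mem _ _ (subset_hull (by simpa using fun h => ha (Subtype.ext h)))
    rw [this]
    exact isClosed_biUnion_finset fun a ha => ih _ (Finset.erase_ssubset ha)

end PointedCone

theorem PointedCone.mem_hull_of_forall_nonneg {X : Type*} [NormedAddCommGroup X]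
    [NormedSpace ℝ X] [FiniteDimensional ℝ X] {S : Set (StrongDual ℝ X)} (hS : S.Finite)
    {g : StrongDual ℝ X} (h : ∀ v, (∀ f ∈ S, 0 ≤ f v) → 0 ≤ g v) : g ∈ hull ℝ S := by
  let C : ProperCone ℝ (StrongDual ℝ X) :=
    ⟨hull ℝ S, by simpa using isClosed_hull_finset hS.toFinset⟩
  change g ∈ C
  rw [← ProperCone.dual_flip_dual (topDualPairing ℝ X) C]
  exact fun v hv => h v fun f hf => hv (subset_hull hf)

/-- A point `(β, z)` stands for the scaled excess demands `z i = β i • (y i - x i)` of agents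
`i` who switch from `x i` to bundles `y i`. -/
abbrev Deviation (n : ℕ) := (Fin n → ℝ) × (Fin n → Fin n → ℝ)

namespace Deviation

variable {n : ℕ}

noncomputable def weight (i : Fin n) : StrongDual ℝ (Deviation n) :=
  LinearMap.toContinuousLinearMap
    { toFun := fun v => v.1 i, map_add' := fun _ _ => rfl, map_smul' := fun _ _ => rfl }

noncomputable def excessValue (i : Fin n) (a : Fin n → ℝ) : StrongDual ℝ (Deviation n) :=
  LinearMap.toContinuousLinearMap
    { toFun := fun v => a ⬝ᵥ v.2 i
      map_add' := fun _ _ => dotProduct_add _ _ _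
      map_smul' := fun c v => dotProduct_smul c a (v.2 i) }

@[simp] lemma weight_apply (i : Fin n) (v : Deviation n) : weight i v = v.1 i := rfl

@[simp] lemma excessValue_apply (i : Fin n) (a : Fin n → ℝ) (v : Deviation n) :
    excessValue i a v = a ⬝ᵥ v.2 i := rfl

end Deviation

open Deviation

section Correction

variable {n : ℕ}

/-- The linear constraints met by `(β, z)` when `z i = β i • (y i - x i)` with `β i ≥ 0`,
`y i ∈ Δⁿ₋` weakly preferred by agent `i` to `x i` and as expensive as `x i` at the price
levels `q l`, `l < k` (for allocations `x` whose rows sum to one). -/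
def IsScaledImprovement (u x : Fin n → Fin n → ℝ) (q : ℕ → Fin n → ℝ) (k : ℕ)
    (β : Fin n → ℝ) (z : Fin n → Fin n → ℝ) : Prop :=
  (∀ i j, 0 ≤ z i j + x i j * β i) ∧ (∀ i, ∑ j, z i j ≤ 0) ∧ (∀ i, 0 ≤ u i ⬝ᵥ z i) ∧
    ∀ i, ∀ l < k, q l ⬝ᵥ z i = 0

def improvementConstraints (u x : Fin n → Fin n → ℝ) (q : ℕ → Fin n → ℝ) (k : ℕ) :
    Set (StrongDual ℝ (Deviation n)) :=
  Set.range (fun ij : Fin n × Fin n =>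
      excessValue ij.1 (Pi.single ij.2 1) + x ij.1 ij.2 • weight ij.1) ∪
    Set.range (fun i => -excessValue i 1) ∪
    Set.range (fun i => excessValue i (u i)) ∪
    Set.range (fun il : Fin n × Fin k => excessValue il.1 (q il.2)) ∪
    Set.range (fun il : Fin n × Fin k => -excessValue il.1 (q il.2))

variable {u x : Fin n → Fin n → ℝ} {q : ℕ → Fin n → ℝ} {k : ℕ}

lemma improvementConstraints_finite : (improvementConstraints u x q k).Finite :=
  ((((Set.finite_range _).union (Set.finite_range _)).union (Set.finite_range _)).union
    (Set.finite_range _)).union (Set.finite_range _)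

lemma forall_improvementConstraints_nonneg_iff (v : Deviation n) :
    (∀ f ∈ improvementConstraints u x q k, 0 ≤ f v) ↔ IsScaledImprovement u x q k v.1 v.2 := by
  simp only [improvementConstraints, Set.mem_union, or_imp, forall_and, Set.forall_mem_range,
    Prod.forall, _root_.add_apply, _root_.neg_apply, _root_.smul_apply, excessValue_apply,
    weight_apply, single_dotProduct, one_dotProduct, one_mul, smul_eq_mul, neg_nonneg,
    IsScaledImprovement]
  constructor
  · rintro ⟨⟨⟨⟨hnonneg, hbudget⟩, hutil⟩, hge⟩, hle⟩
    exact ⟨hnonneg, hbudget, hutil, fun i l hl => le_antisymm (hle i ⟨l, hl⟩) (hge i ⟨l, hl⟩)⟩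
  · rintro ⟨hnonneg, hbudget, hutil, hprice⟩
    exact ⟨⟨⟨⟨hnonneg, hbudget⟩, hutil⟩, fun i l => (hprice i l l.2).ge⟩,
      fun i l => (hprice i l l.2).le⟩

lemma isScaledImprovement_single {i : Fin n} (hx : ∑ j, x i j = 1) {y : Fin n → ℝ}
    (hy : InSimplexLe y) (hu : u i ⬝ᵥ x i ≤ u i ⬝ᵥ y) (hq : ∀ l < k, q l ⬝ᵥ y = q l ⬝ᵥ x i) :
    IsScaledImprovement u x q k (Pi.single i 1) (Pi.single i (y - x i)) := by
  refine ⟨fun i' j => ?_, fun i' => ?_, fun i' => ?_, fun i' l hl => ?_⟩ <;>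
    rcases eq_or_ne i' i with rfl | hi
  all_goals simp [*, dotProduct_sub, sum_sub_distrib, hy.1, hy.2]

lemma sum_excessValue_apply (a : Fin n → ℝ) (v : Deviation n) :
    (∑ i, excessValue i a) v = a ⬝ᵥ ∑ i, v.2 i := by
  simp [dotProduct_sum]

lemma nonneg_apply_single_of_mem_hull {a : StrongDual ℝ (Deviation n)}
    (ha : a ∈ PointedCone.hull ℝ (improvementConstraints u x q k)) {i : Fin n}
    (hx : ∑ j, x i j = 1) {y : Fin n → ℝ} (hy : InSimplexLe y) (hu : u i ⬝ᵥ x i ≤ u i ⬝ᵥ y)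
    (hq : ∀ l < k, q l ⬝ᵥ y = q l ⬝ᵥ x i) :
    0 ≤ a (Pi.single i 1, Pi.single i (y - x i)) := by
  have hv : (Pi.single i 1, Pi.single i (y - x i)) ∈ PointedCone.dual
      (topDualPairing ℝ (Deviation n)) (PointedCone.hull ℝ (improvementConstraints u x q k)) := by
    rw [PointedCone.dual_hull]
    exact (forall_improvementConstraints_nonneg_iff _).mpr (isScaledImprovement_single hx hy hu hq)
  exact hv ha

/-- `ck` is the vector of Farkas multipliers of the market constraints `∑ i, z i j ≤ 0`,
`j ∈ G`. -/
theorem exists_farkas_multipliers (r : Fin n → ℝ) (G : Finset (Fin n))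
    (h : ∀ β z, IsScaledImprovement u x q k β z → (∀ j ∈ G, ∑ i, z i j ≤ 0) →
      0 ≤ ∑ i, r ⬝ᵥ z i) :
    ∃ a ∈ PointedCone.hull ℝ (improvementConstraints u x q k), ∃ ck : Fin n → ℝ, 0 ≤ ck ∧
      (∀ j ∉ G, ck j = 0) ∧ a - ∑ i, excessValue i ck = ∑ i, excessValue i r := by
  classical
  let market : Fin n → StrongDual ℝ (Deviation n) := fun j => -∑ i, excessValue i (Pi.single j 1)
  have hmem : ∑ i, excessValue i r ∈
      PointedCone.hull ℝ (improvementConstraints u x q k ∪ market '' G) := by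
    refine PointedCone.mem_hull_of_forall_nonneg
      (improvementConstraints_finite.union (G.finite_toSet.image _)) fun v hv => ?_
    simp only [Set.mem_union, or_imp, forall_and, Set.forall_mem_image] at hv
    simpa using h v.1 v.2 ((forall_improvementConstraints_nonneg_iff v).mp hv.1)
      (fun j hj => by simpa [market, single_dotProduct] using hv.2 hj)
  rw [PointedCone.hull, Submodule.span_union, Submodule.mem_sup] at hmem
  obtain ⟨a, ha, b, hb, hab⟩ := hmem
  obtain ⟨c, rfl⟩ := (Submodule.mem_span_image_finset_iff_exists_fun' _).mp hb
  set ck : Fin n → ℝ := fun j => if j ∈ G then (c j : ℝ) else 0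
  have hmarket : ∑ j ∈ G, c j • market j = -∑ i, excessValue i ck := by
    refine ContinuousLinearMap.ext fun v => ?_
    simp only [market, ck, ← Nonneg.coe_smul, _root_.sum_apply, _root_.smul_apply,
      _root_.neg_apply, excessValue_apply, single_dotProduct, one_mul, smul_eq_mul, mul_neg,
      sum_neg_distrib, neg_inj]
    simp only [dotProduct, ite_mul, zero_mul, mul_sum, ← sum_filter, filter_mem_eq_inter,
      univ_inter]
    exact sum_comm
  refine ⟨a, ha, ck, fun j => ?_, fun j hj => if_neg hj, by rw [← hab, hmarket, sub_eq_add_neg]⟩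
  simp only [ck]
  split_ifs
  exacts [(c j).2, le_rfl]

theorem exists_correction_of_forall_nonneg (hx : ∀ i, ∑ j, x i j = 1) (r : Fin n → ℝ)
    (G : Finset (Fin n))
    (h : ∀ β z, IsScaledImprovement u x q k β z → (∀ j ∈ G, ∑ i, z i j ≤ 0) →
      0 ≤ ∑ i, r ⬝ᵥ z i) :
    ∃ ck : Fin n → ℝ, 0 ≤ ck ∧ (∀ j ∉ G, ck j = 0) ∧
      ∀ i y, InSimplexLe y → u i ⬝ᵥ x i ≤ u i ⬝ᵥ y → (∀ l < k, q l ⬝ᵥ y = q l ⬝ᵥ x i) →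
        (r + ck) ⬝ᵥ x i ≤ (r + ck) ⬝ᵥ y := by
  obtain ⟨a, ha, ck, hck0, hckG, hab⟩ := exists_farkas_multipliers r G h
  refine ⟨ck, hck0, hckG, fun i y hy hu hq => ?_⟩
  have hval := congrArg
    (fun f : StrongDual ℝ (Deviation n) => f (Pi.single i 1, Pi.single i (y - x i))) hab
  simp only [_root_.sub_apply, sum_excessValue_apply, sum_pi_single', mem_univ, if_true] at hval
  have hnonneg := nonneg_apply_single_of_mem_hull ha (hx i) hy hu hq
  rw [← sub_nonneg, ← dotProduct_sub, add_dotProduct]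
  linarith

end Correction

section AggregateCheapestBundle

variable {n d k : ℕ} {u x : Fin n → Fin n → ℝ} {p : ℕ → Fin n → ℝ}

lemma dotp_eq_dotProduct (a b : Fin n → ℝ) : dotp a b = a ⬝ᵥ b := rfl

lemma dotProduct_nonpos_of_nonneg {a w : Fin n → ℝ} (ha : 0 ≤ a) (hw : ∀ j, a j ≠ 0 → w j ≤ 0) :
    a ⬝ᵥ w ≤ 0 :=
  sum_nonpos fun j _ => by
    rcases eq_or_ne (a j) 0 with h | h
    · simp [h]
    · exact mul_nonpos_of_nonneg_of_nonpos (ha j) (hw j h)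

lemma IsScaledImprovement.exists_bundles {q : ℕ → Fin n → ℝ} (hx0 : ∀ i j, 0 ≤ x i j)
    (hx1 : ∀ i, ∑ j, x i j = 1) {β : Fin n → ℝ} {z : Fin n → Fin n → ℝ}
    (hz : IsScaledImprovement u x q k β z) :
    0 ≤ β ∧ ∃ y : Fin n → Fin n → ℝ, (∀ i, InSimplexLe (y i)) ∧
      (∀ i, 0 < β i → u i ⬝ᵥ x i ≤ u i ⬝ᵥ y i) ∧ ∀ i, β i • (y i - x i) = z i := by
  obtain ⟨hnonneg, hbudget, hutil, -⟩ := hz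
  have hβ : ∀ i, 0 ≤ β i := fun i => by
    have := sum_le_sum fun j (_ : j ∈ univ) => hnonneg i j
    rw [sum_add_distrib, ← sum_mul, hx1 i, sum_const_zero] at this
    linarith [hbudget i]
  have hz0 : ∀ i, β i = 0 → z i = 0 := fun i hi => by
    have hzi : 0 ≤ z i := fun j => by simpa [hi] using hnonneg i j
    funext j
    exact (sum_eq_zero_iff_of_nonneg fun j _ => hzi j).mp
      (le_antisymm (hbudget i) (sum_nonneg fun j _ => hzi j)) j (mem_univ j)
  -- for `β i = 0` we have `z i = 0`, and the junk value `0⁻¹ = 0` gives `y i = x i`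
  refine ⟨hβ, fun i => x i + (β i)⁻¹ • z i, fun i => ⟨fun j => ?_, ?_⟩, fun i hi => ?_,
    fun i => ?_⟩
  · rcases (hβ i).eq_or_lt with hi | hi
    · simp [← hi, hx0 i j]
    · have := hnonneg i j
      simp only [Pi.add_apply, Pi.smul_apply, smul_eq_mul]
      rw [← mul_le_mul_iff_right₀ hi, mul_zero, mul_add, mul_inv_cancel_left₀ hi.ne']
      linarith
  · simp only [Pi.add_apply, Pi.smul_apply, smul_eq_mul, sum_add_distrib, ← mul_sum, hx1 i]
    linarith [mul_nonpos_of_nonneg_of_nonpos (inv_nonneg.mpr (hβ i)) (hbudget i)]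
  · simpa [dotProduct_add, dotProduct_smul] using mul_nonneg (inv_nonneg.mpr hi.le) (hutil i)
  · rcases eq_or_ne (β i) 0 with hi | hi
    · simp [hi, hz0 i hi]
    · simp [smul_inv_smul₀ hi]

lemma AggCB.nonneg_dotProduct_excess (hagg : AggCB u d x p) (hk : k < d) {β : Fin n → ℝ}
    (hβ : 0 ≤ β) {y : Fin n → Fin n → ℝ} (hy : ∀ i, InSimplexLe (y i))
    (hu : ∀ i, 0 < β i → u i ⬝ᵥ x i ≤ u i ⬝ᵥ y i)
    (hlow : ∀ l < k, p l ⬝ᵥ ∑ i, β i • (y i - x i) = 0)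
    (hG : ∀ j, (∃ l < k, 0 < p l j) → (∑ i, β i • (y i - x i)) j ≤ 0) :
    0 ≤ p k ⬝ᵥ ∑ i, β i • (y i - x i) := by
  have hYX : (fun j => ∑ i, β i * y i j) =
      (fun j => ∑ i, β i * x i j) + ∑ i, β i • (y i - x i) := by
    ext j
    simp [Finset.sum_apply, mul_sub]
  by_contra hneg
  refine hagg ⟨β, y, k, hβ, hy, hk, hu, fun l hl => ?_, ?_, fun j hj => ?_⟩
  · rw [dotp_eq_dotProduct, hYX, dotProduct_add, hlow l hl, add_zero]
    rfl
  · rw [dotp_eq_dotProduct, hYX, dotProduct_add]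
    change _ < p k ⬝ᵥ _
    linarith
  · have := hG j hj
    simp only [Finset.sum_apply, Pi.smul_apply, Pi.sub_apply, smul_eq_mul, mul_sub,
      sum_sub_distrib] at this
    linarith

open Classical in
noncomputable def lowGoods (p : ℕ → Fin n → ℝ) (k : ℕ) : Finset (Fin n) :=
  univ.filter fun j => ∃ l < k, 0 < p l j

lemma AggCB.nonneg_of_isScaledImprovement (hagg : AggCB u d x p) (hx0 : ∀ i j, 0 ≤ x i j)
    (hx1 : ∀ i, ∑ j, x i j = 1) (hk : k < d) (hp0 : ∀ l < d, 0 ≤ p l) {c : ℕ → Fin n → ℝ}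
    (hc0 : ∀ l, 0 ≤ c l) (hcsupp : ∀ l j, c l j ≠ 0 → ∃ l' < l, 0 < p l' j)
    {β : Fin n → ℝ} {z : Fin n → Fin n → ℝ} (hz : IsScaledImprovement u x (p + c) k β z)
    (hG : ∀ j ∈ lowGoods p k, ∑ i, z i j ≤ 0) :
    0 ≤ ∑ i, p k ⬝ᵥ z i := by
  obtain ⟨hβ, y, hy, hu, hyz⟩ := hz.exists_bundles hx0 hx1
  obtain rfl : (fun i => β i • (y i - x i)) = z := funext hyz
  have hZ : ∀ j, (∃ l < k, 0 < p l j) → (∑ i, β i • (y i - x i)) j ≤ 0 := fun j hj => by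
    simpa [Finset.sum_apply] using hG j (by simpa [lowGoods] using hj)
  rw [← dotProduct_sum]
  refine hagg.nonneg_dotProduct_excess hk hβ hy hu (fun l hl => le_antisymm ?_ ?_) hZ
  · refine dotProduct_nonpos_of_nonneg (hp0 l (hl.trans hk)) fun j hj => hZ j ⟨l, hl, ?_⟩
    exact lt_of_le_of_ne (hp0 l (hl.trans hk) j) (Ne.symm hj)
  · have hsum : (p l + c l) ⬝ᵥ ∑ i, β i • (y i - x i) = 0 := by
      rw [dotProduct_sum]
      exact sum_eq_zero fun i _ => hz.2.2.2 i l hl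
    have hc : c l ⬝ᵥ ∑ i, β i • (y i - x i) ≤ 0 :=
      dotProduct_nonpos_of_nonneg (hc0 l) fun j hj => by
        obtain ⟨l', hl', hpos⟩ := hcsupp l j hj
        exact hZ j ⟨l', hl'.trans hl, hpos⟩
    rw [add_dotProduct] at hsum
    linarith

def IsCheapestAt (u x : Fin n → Fin n → ℝ) (q : ℕ → Fin n → ℝ) (k : ℕ) : Prop :=
  ∀ i y, InSimplexLe y → u i ⬝ᵥ x i ≤ u i ⬝ᵥ y → (∀ l < k, q l ⬝ᵥ y = q l ⬝ᵥ x i) →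
    q k ⬝ᵥ x i ≤ q k ⬝ᵥ y

lemma IsCheapestAt.congr {q q' : ℕ → Fin n → ℝ} (h : IsCheapestAt u x q k)
    (hq : ∀ l ≤ k, q l = q' l) : IsCheapestAt u x q' k := by
  intro i y hy hu heq
  rw [← hq k le_rfl]
  exact h i y hy hu fun l hl => by rw [hq l hl.le]; exact heq l hl

lemma strongCB_of_isCheapestAt {q : ℕ → Fin n → ℝ} (h : ∀ k < d, IsCheapestAt u x q k) :
    StrongCB u d x q :=
  fun ⟨i, y, k, hy, hu, hk, heq, hlt⟩ => (h k hk i y hy hu heq).not_gt hlt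

theorem AggCB.exists_cheapest_correction (hagg : AggCB u d x p) (hx0 : ∀ i j, 0 ≤ x i j)
    (hx1 : ∀ i, ∑ j, x i j = 1) (hp0 : ∀ l < d, 0 ≤ p l) :
    ∃ c : ℕ → Fin n → ℝ, (∀ l, 0 ≤ c l) ∧ (∀ l j, c l j ≠ 0 → ∃ l' < l, 0 < p l' j) ∧
      ∀ k < d, IsCheapestAt u x (p + c) k := by
  suffices ∀ m ≤ d, ∃ c : ℕ → Fin n → ℝ, (∀ l, 0 ≤ c l) ∧
      (∀ l j, c l j ≠ 0 → ∃ l' < l, 0 < p l' j) ∧ ∀ k < m, IsCheapestAt u x (p + c) k from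
    this d le_rfl
  intro m hm
  induction m with
  | zero => exact ⟨0, fun _ => le_rfl, fun _ _ h => absurd rfl h, fun k h => absurd h k.not_lt_zero⟩
  | succ m ih =>
    obtain ⟨c, hc0, hcsupp, hcheap⟩ := ih (by omega)
    obtain ⟨ck, hck0, hckG, hck⟩ := exists_correction_of_forall_nonneg (q := p + c) hx1 (p m)
      (lowGoods p m) fun β z hz hG =>
        hagg.nonneg_of_isScaledImprovement hx0 hx1 (by omega) hp0 hc0 hcsupp hz hG
    have hagree : ∀ l < m, (p + c) l = (p + Function.update c m ck) l := fun l hl => by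
      simp [hl.ne]
    refine ⟨Function.update c m ck, fun l => ?_, fun l j hlj => ?_, fun k hk => ?_⟩
    · rcases eq_or_ne l m with rfl | hl
      · simpa using hck0
      · simpa [hl] using hc0 l
    · rcases eq_or_ne l m with rfl | hl
      · by_contra hlow
        exact hlj (by simpa using hckG j (by simpa [lowGoods] using hlow))
      · exact hcsupp l j (by simpa [hl] using hlj)
    · rcases Nat.lt_succ_iff_lt_or_eq.mp hk with hk | rfl
      · exact (hcheap k hk).congr fun l hl => hagree l (by omega)
      · intro i y hy hu heq
        simpa using hck i y hy hu fun l hl => by rw [hagree l hl]; exact heq l hl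

end AggregateCheapestBundle

section Equilibrium

variable {n d : ℕ} {u x ω : Fin n → Fin n → ℝ} {p α : ℕ → Fin n → ℝ} {i : Fin n}

lemma price_nonneg_of_simplePrices
    (hfirst : ∀ (j : Fin n) (k : ℕ), k < d → p k j ≠ 0 → (∀ l < k, p l j = 0) → 0 < p k j)
    (hsimple : SimplePrices d p) : ∀ l < d, 0 ≤ p l := fun l hl j => by
  by_cases hj : p l j = 0
  · exact hj.ge
  · refine (hfirst j l hl hj fun l' hl' => ?_).le
    by_contra h
    exact hl'.ne (hsimple j l' l (hl'.trans hl) hl h hj)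

lemma leadingEntry_pos_add {c : ℕ → Fin n → ℝ}
    (hfirst : ∀ (j : Fin n) (k : ℕ), k < d → p k j ≠ 0 → (∀ l < k, p l j = 0) → 0 < p k j)
    (hp0 : ∀ l < d, 0 ≤ p l) (hc0 : ∀ l, 0 ≤ c l)
    (hcsupp : ∀ l j, c l j ≠ 0 → ∃ l' < l, 0 < p l' j) (j : Fin n) (k : ℕ) (hk : k < d)
    (hne : (p + c) k j ≠ 0) (hprev : ∀ l < k, (p + c) l j = 0) : 0 < (p + c) k j := by
  have hp : ∀ l < k, p l j = 0 := fun l hl => by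
    have hsum : p l j + c l j = 0 := hprev l hl
    have hpl : 0 ≤ p l j := hp0 l (hl.trans hk) j
    have hcl : 0 ≤ c l j := hc0 l j
    linarith
  have hc : c k j = 0 := by
    by_contra h
    obtain ⟨l, hl, hpos⟩ := hcsupp k j h
    exact hpos.ne' (hp l hl)
  simp only [Pi.add_apply, hc, add_zero] at hne ⊢
  exact hfirst j k hk hne hp

lemma Nat.sInf_eq_of_forall_le_sInf {s t : Set ℕ} (hs : s.Nonempty)
    (h : ∀ l ≤ sInf s, l ∈ t ↔ l ∈ s) : sInf t = sInf s := by
  have hmem : sInf s ∈ t := (h _ le_rfl).2 (Nat.sInf_mem hs)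
  refine le_antisymm (Nat.sInf_le hmem) (le_of_not_gt fun hlt => ?_)
  exact Nat.notMem_of_lt_sInf hlt ((h _ hlt.le).1 (Nat.sInf_mem ⟨_, hmem⟩))

lemma kIdx_le_pred : kIdx d p α ω i ≤ d - 1 := Nat.sInf_le (Or.inr rfl)

lemma kIdx_congr {q γ : ℕ → Fin n → ℝ}
    (h : ∀ l ≤ kIdx d p α ω i, dotp (q l) (ω i) + γ l i = dotp (p l) (ω i) + α l i) :
    kIdx d q γ ω i = kIdx d p α ω i :=
  Nat.sInf_eq_of_forall_le_sInf ⟨d - 1, Or.inr rfl⟩ fun l hl => by simp [h l hl]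

lemma eq_zero_of_dotProduct_eq_zero {a w : Fin n → ℝ} (ha : 0 ≤ a) (hw : 0 ≤ w)
    (h : a ⬝ᵥ w = 0) {j : Fin n} (hj : 0 < a j) : w j = 0 := by
  have := (sum_eq_zero_iff_of_nonneg fun j _ => mul_nonneg (ha j) (hw j)).mp h j (mem_univ j)
  exact (mul_eq_zero.mp this).resolve_left hj.ne'

lemma IsLDE.eq_zero_of_lt_kIdx (hLDE : IsLDE u ω d x p α) (hω0 : ∀ i j, 0 ≤ ω i j)
    (hp0 : ∀ l < d, 0 ≤ p l) {l : ℕ} (hl : l < kIdx d p α ω i) {j : Fin n} (hj : 0 < p l j) :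
    ω i j = 0 ∧ x i j = 0 := by
  obtain ⟨⟨hx0, -, -⟩, hα0, -, hα, -⟩ := hLDE
  have hld : l < d := by have : kIdx d p α ω i ≤ d - 1 := kIdx_le_pred; omega
  have hincome : ¬ 0 < dotp (p l) (ω i) + α l i := fun h =>
    Nat.notMem_of_lt_sInf hl (Or.inl ⟨hld, h⟩)
  have hpω0 : 0 ≤ p l ⬝ᵥ ω i := dotProduct_nonneg_of_nonneg (hp0 l hld) (hω0 i)
  have hpx0 : 0 ≤ p l ⬝ᵥ x i := dotProduct_nonneg_of_nonneg (hp0 l hld) (hx0 i)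
  have hαl0 : 0 ≤ α l i := hα0 l hld i
  rw [not_lt, dotp_eq_dotProduct] at hincome
  have hpω : p l ⬝ᵥ ω i = 0 := by linarith
  have hexcess : p l ⬝ᵥ (x i - ω i) ≤ 0 :=
    (le_max_left _ _).trans (hα i l hld ▸ (by linarith : α l i ≤ 0))
  have hpx : p l ⬝ᵥ x i = 0 := by rw [dotProduct_sub] at hexcess; linarith
  exact ⟨eq_zero_of_dotProduct_eq_zero (hp0 l hld) (hω0 i) hpω hj,
    eq_zero_of_dotProduct_eq_zero (hp0 l hld) (hx0 i) hpx hj⟩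

lemma IsLDE.budgetSet_add_subset (hLDE : IsLDE u ω d x p α) (hd : 1 ≤ d)
    (hω0 : ∀ i j, 0 ≤ ω i j) (hp0 : ∀ l < d, 0 ≤ p l) {c : ℕ → Fin n → ℝ} (hc0 : ∀ l, 0 ≤ c l)
    (hcsupp : ∀ l j, c l j ≠ 0 → ∃ l' < l, 0 < p l' j) :
    BudgetSet d (p + c) (fun l i => max (dotp ((p + c) l) (fun j => x i j - ω i j)) 0) ω i ⊆
      BudgetSet d p α ω i := by
  have ⟨_, _, _, hα, _⟩ := hLDE
  have hκ : kIdx d p α ω i < d := by have : kIdx d p α ω i ≤ d - 1 := kIdx_le_pred; omega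
  -- a correction of level `l ≤ k_i` only prices goods that agent `i` neither owns nor consumes
  have hinvisible : ∀ l ≤ kIdx d p α ω i, ∀ w : Fin n → ℝ,
      (∀ l' < kIdx d p α ω i, ∀ j, 0 < p l' j → w j = 0) → (p + c) l ⬝ᵥ w = p l ⬝ᵥ w := by
    intro l hl w hw
    rw [Pi.add_apply, add_dotProduct, add_eq_left]
    refine sum_eq_zero fun j _ => ?_
    rcases eq_or_ne (c l j) 0 with h | h
    · simp [h]
    · obtain ⟨l', hl', hpos⟩ := hcsupp l j h
      simp [hw l' (hl'.trans_le hl) j hpos]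
  have hω : ∀ l ≤ kIdx d p α ω i, (p + c) l ⬝ᵥ ω i = p l ⬝ᵥ ω i := fun l hl =>
    hinvisible l hl _ fun l' hl' j hj => (hLDE.eq_zero_of_lt_kIdx hω0 hp0 hl' hj).1
  have hx : ∀ l ≤ kIdx d p α ω i, (p + c) l ⬝ᵥ x i = p l ⬝ᵥ x i := fun l hl =>
    hinvisible l hl _ fun l' hl' j hj => (hLDE.eq_zero_of_lt_kIdx hω0 hp0 hl' hj).2
  have hincome : ∀ l ≤ kIdx d p α ω i,
      dotp ((p + c) l) (ω i) = dotp (p l) (ω i) ∧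
        max (dotp ((p + c) l) (fun j => x i j - ω i j)) 0 = α l i := fun l hl => by
    refine ⟨hω l hl, ?_⟩
    rw [hα i l (hl.trans_lt hκ)]
    change max ((p + c) l ⬝ᵥ (x i - ω i)) 0 = max (p l ⬝ᵥ (x i - ω i)) 0
    rw [dotProduct_sub, dotProduct_sub, hω l hl, hx l hl]
  rintro y ⟨hy, hbudget⟩
  refine ⟨hy, fun k hk => ?_⟩
  have hk' := hbudget k (by rwa [kIdx_congr fun l hl => by rw [(hincome l hl).1, (hincome l hl).2]])
  beta_reduce at hk'
  rw [(hincome k hk).1, (hincome k hk).2] at hk'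
  have hcy : 0 ≤ c k ⬝ᵥ y := dotProduct_nonneg_of_nonneg (hc0 k) hy.1
  rw [dotp_eq_dotProduct, Pi.add_apply, add_dotProduct] at hk'
  rw [dotp_eq_dotProduct]
  linarith

theorem IsLDE.add_correction (hLDE : IsLDE u ω d x p α) (hd : 1 ≤ d)
    (hω0 : ∀ i j, 0 ≤ ω i j) (hp0 : ∀ l < d, 0 ≤ p l) {c : ℕ → Fin n → ℝ} (hc0 : ∀ l, 0 ≤ c l)
    (hcsupp : ∀ l j, c l j ≠ 0 → ∃ l' < l, 0 < p l' j) :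
    IsLDE u ω d x (p + c) (fun l i => max (dotp ((p + c) l) (fun j => x i j - ω i j)) 0) := by
  have ⟨hx, _, hfirst, _, hopt⟩ := hLDE
  exact ⟨hx, fun _ _ _ => le_max_right _ _, leadingEntry_pos_add hfirst hp0 hc0 hcsupp,
    fun _ _ _ => rfl, fun i y hy => hopt i y (hLDE.budgetSet_add_subset hd hω0 hp0 hc0 hcsupp hy)⟩

end Equilibrium

theorem lde_minus_subset_lde_plus_general {n : ℕ}
    (u ω : Fin n → Fin n → ℝ)
    (hω0 : ∀ i j, 0 ≤ ω i j)
    (d : ℕ) (hd : 1 ≤ d) (x : Fin n → Fin n → ℝ) (p α : ℕ → Fin n → ℝ)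
    (hLDE : IsLDE u ω d x p α) (hsimple : SimplePrices d p)
    (hagg : AggCB u d x p) :
    ∃ (q γ : ℕ → Fin n → ℝ),
      IsLDE u ω d x q γ ∧ StrongCB u d x q := by
  have ⟨⟨hx0, hx1, _⟩, _, hfirst, _, _⟩ := hLDE
  have hp0 := price_nonneg_of_simplePrices hfirst hsimple
  obtain ⟨c, hc0, hcsupp, hcheap⟩ := hagg.exists_cheapest_correction hx0 hx1 hp0
  exact ⟨p + c, _, hLDE.add_correction hd hω0 hp0 hc0 hcsupp, strongCB_of_isCheapestAt hcheap⟩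

/-- an LDE with simple prices satisfying the weak and aggregate cheapest
bundle properties can be supported as an LDE satisfying the strong cheapest bundle
property; in particular `LDE₋(u, ω) ⊆ LDE₊(u, ω)`. -/
theorem lde_minus_subset_lde_plus {n : ℕ} (hn : 0 < n)
    (u ω : Fin n → Fin n → ℝ)
    (hu : ∀ i j, 0 ≤ u i j) (hω0 : ∀ i j, 0 ≤ ω i j)
    (hω1 : ∀ j, ∑ i, ω i j = 1)
    (d : ℕ) (hd : 1 ≤ d) (x : Fin n → Fin n → ℝ) (p α : ℕ → Fin n → ℝ)
    (hLDE : IsLDE u ω d x p α) (hsimple : SimplePrices d p)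
    (hweak : WeakCB u ω d x p α) (hagg : AggCB u d x p) :
    ∃ (q γ : ℕ → Fin n → ℝ),
      IsLDE u ω d x q γ ∧ StrongCB u d x q :=
  lde_minus_subset_lde_plus_general u ω hω0 d hd x p α hLDE hsimple hagg
end

section
/- Let (x, p, α) be a d-dimensional lexicographic dividend equilibrium for the economy (u, ω) satisfying the strong cheapest bundle property. For each good j define k^j := min({k : p^{(k)}_j ≠ 0} ∪ {d}), and for each agent i let k_i := min({k : p^{(k)} · ω_i + α^{(k)}_i > 0} ∪ {d}). Then for every agent i and every good j with k^j < k_i, one has x_{ij} = 0 and ω_{ij} = 0. -/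
open Finset

/-- `k^j` (0-based): the first currency in which good `j` has a nonzero price,
or the last currency `d - 1` if there is none. -/
noncomputable def kGood {n : ℕ} (d : ℕ) (p : ℕ → Fin n → ℝ) (j : Fin n) : ℕ :=
  sInf ({k | k < d ∧ p k j ≠ 0} ∪ {d - 1})

/-!
Sort the goods into tiers by the first currency in which they carry a nonzero price, and argue by
strong induction on the tier `k < kᵢ`. Once agent `i` is known to hold and own nothing of the
tiers below `k`, every good she holds or owns has a nonnegative `k`-th price, positive for the
goods of tier `k`; so both `p⁽ᵏ⁾ · xᵢ` and `p⁽ᵏ⁾ · ωᵢ` are nonnegative. Her `k`-th income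
`p⁽ᵏ⁾ · ωᵢ + αᵢ⁽ᵏ⁾` is nonpositive because `k < kᵢ`, which forces `p⁽ᵏ⁾ · ωᵢ = αᵢ⁽ᵏ⁾ = 0`, and then
`αᵢ⁽ᵏ⁾ = max (p⁽ᵏ⁾ · (xᵢ - ωᵢ)) 0` forces `p⁽ᵏ⁾ · xᵢ = 0`. A vanishing sum of nonnegative terms
kills every tier-`k` coordinate of `xᵢ` and `ωᵢ`.
-/

lemma Nat.sInf_union_singleton_le (S : Set ℕ) (m : ℕ) : sInf (S ∪ {m}) ≤ m :=
  Nat.sInf_le (Or.inr rfl)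

lemma Nat.sInf_union_singleton_mem_of_lt {S : Set ℕ} {m : ℕ} (h : sInf (S ∪ {m}) < m) :
    sInf (S ∪ {m}) ∈ S :=
  (Nat.sInf_mem (s := S ∪ {m}) ⟨m, Or.inr rfl⟩).resolve_right h.ne

lemma dotp_sub {n : ℕ} (a b c : Fin n → ℝ) :
    dotp a (fun j => b j - c j) = dotp a b - dotp a c := by
  simp only [dotp, mul_sub, Finset.sum_sub_distrib]

lemma eq_zero_of_dotp_eq_zero {n : ℕ} {a b : Fin n → ℝ} (hab : ∀ j, 0 ≤ a j * b j)
    (h : dotp a b = 0) {j : Fin n} (ha : 0 < a j) : b j = 0 := by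
  have hj : a j * b j = 0 := (sum_eq_zero_iff_of_nonneg fun j _ => hab j).mp h j (mem_univ j)
  exact (mul_eq_zero.mp hj).resolve_left ha.ne'

/-- Condition (i) of an LDE. -/
def FirstNonzeroPricePos {n : ℕ} (d : ℕ) (p : ℕ → Fin n → ℝ) : Prop :=
  ∀ (j : Fin n) (k : ℕ), k < d → p k j ≠ 0 → (∀ l < k, p l j = 0) → 0 < p k j

section Tiers

variable {n d : ℕ} {p : ℕ → Fin n → ℝ}

lemma price_eq_zero_of_lt_kGood {j : Fin n} {k : ℕ} (hk : k < d) (h : k < kGood d p j) :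
    p k j = 0 := by
  by_contra hne
  exact Nat.notMem_of_lt_sInf h (Or.inl ⟨hk, hne⟩)

lemma price_kGood_pos (hpos : FirstNonzeroPricePos d p) {j : Fin n} (hj : kGood d p j < d - 1) :
    0 < p (kGood d p j) j := by
  obtain ⟨hjd, hne⟩ := Nat.sInf_union_singleton_mem_of_lt hj
  exact hpos j _ hjd hne fun l hl => price_eq_zero_of_lt_kGood (hl.trans hjd) hl

lemma price_mul_nonneg_of_eq_zero_below (hpos : FirstNonzeroPricePos d p) {k : ℕ}
    (hk : k < d - 1) {v : Fin n → ℝ} (hv0 : ∀ j, 0 ≤ v j)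
    (hlow : ∀ j, kGood d p j < k → v j = 0) (j : Fin n) : 0 ≤ p k j * v j := by
  rcases lt_trichotomy (kGood d p j) k with hlt | rfl | hgt
  · simp [hlow j hlt]
  · exact mul_nonneg (price_kGood_pos hpos hk).le (hv0 j)
  · simp [price_eq_zero_of_lt_kGood (hk.trans_le (d.sub_le 1)) hgt]

lemma lt_pred_of_lt_kIdx {α : ℕ → Fin n → ℝ} {ω : Fin n → Fin n → ℝ} {i : Fin n} {k : ℕ}
    (h : k < kIdx d p α ω i) : k < d - 1 :=
  h.trans_le (Nat.sInf_union_singleton_le _ _)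

lemma income_nonpos_of_lt_kIdx {α : ℕ → Fin n → ℝ} {ω : Fin n → Fin n → ℝ} {i : Fin n} {k : ℕ}
    (h : k < kIdx d p α ω i) : dotp (p k) (ω i) + α k i ≤ 0 := by
  by_contra hinc
  exact Nat.notMem_of_lt_sInf h
    (Or.inl ⟨(lt_pred_of_lt_kIdx h).trans_le (d.sub_le 1), not_le.mp hinc⟩)

lemma holdings_eq_zero_of_lt_kIdx {x ω : Fin n → Fin n → ℝ} {α : ℕ → Fin n → ℝ}
    (hx0 : ∀ i j, 0 ≤ x i j) (hω0 : ∀ i j, 0 ≤ ω i j) (hα0 : ∀ k, k < d → ∀ i, 0 ≤ α k i)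
    (hpos : FirstNonzeroPricePos d p)
    (hα : ∀ (i : Fin n) (k : ℕ), k < d → α k i = max (dotp (p k) (fun j => x i j - ω i j)) 0)
    (i : Fin n) (k : ℕ) : k < kIdx d p α ω i → ∀ j, kGood d p j = k → x i j = 0 ∧ ω i j = 0 := by
  induction k using Nat.strong_induction_on with
  | _ k ih =>
  intro hki j hj
  have hk := lt_pred_of_lt_kIdx hki
  have hkd : k < d := hk.trans_le (d.sub_le 1)
  have hlow : ∀ j', kGood d p j' < k → x i j' = 0 ∧ ω i j' = 0 :=
    fun j' hj' => ih _ hj' (hj'.trans hki) j' rfl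
  have hxterm := price_mul_nonneg_of_eq_zero_below hpos hk (hx0 i) fun j' h => (hlow j' h).1
  have hωterm := price_mul_nonneg_of_eq_zero_below hpos hk (hω0 i) fun j' h => (hlow j' h).2
  have hx : 0 ≤ dotp (p k) (x i) := sum_nonneg fun j' _ => hxterm j'
  have hω : 0 ≤ dotp (p k) (ω i) := sum_nonneg fun j' _ => hωterm j'
  have hinc := income_nonpos_of_lt_kIdx hki
  have hαk := hα0 k hkd i
  have hω_eq : dotp (p k) (ω i) = 0 := by linarith
  have hx_eq : dotp (p k) (x i) = 0 := by
    have hmax := le_max_left (dotp (p k) (fun j => x i j - ω i j)) 0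
    rw [← hα i k hkd, dotp_sub] at hmax
    linarith
  have hpj : 0 < p k j := hj ▸ price_kGood_pos hpos (hj ▸ hk)
  exact ⟨eq_zero_of_dotp_eq_zero hxterm hx_eq hpj, eq_zero_of_dotp_eq_zero hωterm hω_eq hpj⟩

end Tiers

theorem no_holdings_of_higher_tier_goods_general {n : ℕ} (u ω : Fin n → Fin n → ℝ)
    (hω0 : ∀ i j, 0 ≤ ω i j)
    (d : ℕ) (x : Fin n → Fin n → ℝ) (p α : ℕ → Fin n → ℝ)
    (hLDE : IsLDE u ω d x p α) :
    ∀ (i : Fin n) (j : Fin n), kGood d p j < kIdx d p α ω i →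
      x i j = 0 ∧ ω i j = 0 := by
  intro i j hij
  obtain ⟨⟨hx0, -, -⟩, hα0, hpos, hα, -⟩ := hLDE
  exact holdings_eq_zero_of_lt_kIdx hx0 hω0 hα0 hpos hα i _ hij j rfl

/-- in an LDE satisfying the strong cheapest bundle property, an agent
neither holds nor is endowed with goods priced in currencies more valuable than the
first currency in which she has positive income. -/
theorem no_holdings_of_higher_tier_goods {n : ℕ} (hn : 0 < n)
    (u ω : Fin n → Fin n → ℝ)
    (hu : ∀ i j, 0 ≤ u i j) (hω0 : ∀ i j, 0 ≤ ω i j)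
    (hω1 : ∀ j, ∑ i, ω i j = 1)
    (d : ℕ) (hd : 1 ≤ d) (x : Fin n → Fin n → ℝ) (p α : ℕ → Fin n → ℝ)
    (hLDE : IsLDE u ω d x p α) (hCB : StrongCB u d x p) :
    ∀ (i : Fin n) (j : Fin n), kGood d p j < kIdx d p α ω i →
      x i j = 0 ∧ ω i j = 0 :=
  no_holdings_of_higher_tier_goods_general u ω hω0 d x p α hLDE
end

section
/- Let λ ∈ ℝⁿ with λ_i > 0 for every agent i, and suppose the VCG price vector satisfies p(λ) = 0. Then every allocation x maximizing ∑_i λ_i (u_i · y_i) over y ∈ M satisfies u_i · x_i = max_j u_{ij} for every agent i; that is, each agent attains the utility of her favorite good. -/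
open Finset

/-- The feasible set for the relaxed welfare problem where the supply of good `l`
is doubled. -/
def FeasRelax {n : ℕ} (l : Fin n) (x : Fin n → Fin n → ℝ) : Prop :=
  (∀ i j, 0 ≤ x i j) ∧ (∀ i, ∑ j, x i j ≤ 1) ∧
  (∀ j, j ≠ l → ∑ i, x i j ≤ 1) ∧ (∑ i, x i l ≤ 2)

/-- `W(λ)`: the maximum weighted welfare over allocations. -/
noncomputable def Wval {n : ℕ} (u : Fin n → Fin n → ℝ) (lam : Fin n → ℝ) : ℝ :=
  sSup ((fun x => ∑ i, lam i * dotp (u i) (x i)) '' {x | IsAlloc x})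

/-- `W_l(λ)`: the maximum weighted welfare when the supply of good `l` is doubled. -/
noncomputable def Wrelax {n : ℕ} (u : Fin n → Fin n → ℝ) (lam : Fin n → ℝ)
    (l : Fin n) : ℝ :=
  sSup ((fun x => ∑ i, lam i * dotp (u i) (x i)) '' {x | FeasRelax l x})

/-- The VCG price vector `p(λ)`, with `p_l(λ) = W_l(λ) − W(λ)`. -/
noncomputable def vcg {n : ℕ} (u : Fin n → Fin n → ℝ) (lam : Fin n → ℝ) :
    Fin n → ℝ :=
  fun l => Wrelax u lam l - Wval u lam

/-!
Fix an agent `i` and a favorite good `l` of hers. Giving `i` the whole unit of `l` while keeping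
everyone else's bundle is feasible once the supply of `l` is doubled, so its welfare is at most
`W_l(λ)`, which equals `W(λ)`, the welfare of `x`, because `p_l(λ) = 0`. The two welfares differ
only in agent `i`'s term, so `λ_i u_{il} ≤ λ_i (u_i · x_i)`, and `λ_i > 0` gives the claim.
-/

open Function

section

variable {n : ℕ}

noncomputable def welfare (u : Fin n → Fin n → ℝ) (lam : Fin n → ℝ) (x : Fin n → Fin n → ℝ) : ℝ :=
  ∑ i, lam i * dotp (u i) (x i)

theorem dotp_le_of_le {a y : Fin n → ℝ} {c : ℝ} (ha : ∀ j, a j ≤ c) (hy : ∀ j, 0 ≤ y j)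
    (hsum : ∑ j, y j = 1) : dotp a y ≤ c :=
  calc dotp a y ≤ ∑ j, c * y j := sum_le_sum fun j _ => mul_le_mul_of_nonneg_right (ha j) (hy j)
    _ = c := by rw [← mul_sum, hsum, mul_one]

theorem dotp_single_one (a : Fin n → ℝ) (l : Fin n) : dotp a (Pi.single l 1) = a l := by
  simp [dotp, Pi.single_apply]

theorem welfare_update (u : Fin n → Fin n → ℝ) (lam : Fin n → ℝ) (x : Fin n → Fin n → ℝ)
    (i : Fin n) (r : Fin n → ℝ) :
    welfare u lam (update x i r) =
      welfare u lam x + lam i * (dotp (u i) r - dotp (u i) (x i)) := by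
  have hterm : (fun k => lam k * dotp (u k) (update x i r k)) =
      update (fun k => lam k * dotp (u k) (x k)) i (lam i * dotp (u i) r) :=
    funext (apply_update (fun k xk => lam k * dotp (u k) xk) x i r)
  rw [welfare, welfare, hterm, sum_update_of_mem (mem_univ i),
    sum_eq_add_sum_sdiff_singleton_of_mem (mem_univ i)]
  ring

theorem welfare_le_of_mem_Icc (u : Fin n → Fin n → ℝ) (lam : Fin n → ℝ)
    {z : Fin n → Fin n → ℝ} (hz : ∀ k j, z k j ∈ Set.Icc 0 1) :
    welfare u lam z ≤ ∑ k, ∑ j, |lam k * u k j| := by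
  refine sum_le_sum fun k _ => ?_
  rw [dotp, mul_sum]
  refine sum_le_sum fun j _ => ?_
  obtain ⟨hz0, hz1⟩ := hz k j
  calc lam k * (u k j * z k j) = lam k * u k j * z k j := by ring
    _ ≤ |lam k * u k j| * z k j := mul_le_mul_of_nonneg_right (le_abs_self _) hz0
    _ ≤ |lam k * u k j| := mul_le_of_le_one_right (abs_nonneg _) hz1

theorem FeasRelax.mem_Icc {l : Fin n} {z : Fin n → Fin n → ℝ} (hz : FeasRelax l z) (k j : Fin n) :
    z k j ∈ Set.Icc 0 1 :=
  ⟨hz.1 k j, (single_le_sum (fun j' _ => hz.1 k j') (mem_univ j)).trans (hz.2.1 k)⟩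

theorem welfare_le_Wrelax (u : Fin n → Fin n → ℝ) (lam : Fin n → ℝ) {l : Fin n}
    {z : Fin n → Fin n → ℝ} (hz : FeasRelax l z) : welfare u lam z ≤ Wrelax u lam l := by
  refine le_csSup ⟨∑ k, ∑ j, |lam k * u k j|, ?_⟩ ⟨z, hz, rfl⟩
  rintro w ⟨z', hz', rfl⟩
  exact welfare_le_of_mem_Icc u lam hz'.mem_Icc

theorem Wval_eq_welfare {u : Fin n → Fin n → ℝ} {lam : Fin n → ℝ} {x : Fin n → Fin n → ℝ}
    (hx : IsAlloc x) (hmax : ∀ y, IsAlloc y → welfare u lam y ≤ welfare u lam x) :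
    Wval u lam = welfare u lam x :=
  IsGreatest.csSup_eq ⟨⟨x, hx, rfl⟩, by rintro w ⟨y, hy, rfl⟩; exact hmax y hy⟩

theorem IsAlloc.feasRelax_update_single {x : Fin n → Fin n → ℝ} (hx : IsAlloc x) (i l : Fin n) :
    FeasRelax l (update x i (Pi.single l 1)) := by
  obtain ⟨hnonneg, hrow, hcol⟩ := hx
  have hle : ∀ k j, update x i (Pi.single l 1) k j ≤ x k j + if k = i ∧ j = l then 1 else 0 := by
    intro k j
    rcases eq_or_ne k i with rfl | hk
    · rw [update_self, Pi.single_apply]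
      split_ifs <;> simp_all [hnonneg k j]
    · simp [hk]
  refine ⟨fun k j => ?_, fun k => ?_, fun j hj => ?_, ?_⟩
  · rcases eq_or_ne k i with rfl | hk
    · rw [update_self, Pi.single_apply]
      split_ifs <;> norm_num
    · simp [hk, hnonneg k j]
  · rcases eq_or_ne k i with rfl | hk
    · simp
    · simp [hk, hrow k]
  · calc ∑ k, update x i (Pi.single l 1) k j ≤ ∑ k, x k j :=
          sum_le_sum fun k _ => by simpa [hj] using hle k j
      _ = 1 := hcol j
  · calc ∑ k, update x i (Pi.single l 1) k l ≤ ∑ k, (x k l + if k = i then 1 else 0) :=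
          sum_le_sum fun k _ => by simpa using hle k l
      _ = 2 := by rw [sum_add_distrib, hcol l]; norm_num

end

theorem zero_prices_imply_favorite_good_general {n : ℕ}
    (u : Fin n → Fin n → ℝ)
    (lam : Fin n → ℝ) (hlam : ∀ i, 0 < lam i)
    (hp : ∀ l : Fin n, vcg u lam l = 0)
    (x : Fin n → Fin n → ℝ) (hx : IsAlloc x)
    (hmax : ∀ y, IsAlloc y →
      ∑ i, lam i * dotp (u i) (y i) ≤ ∑ i, lam i * dotp (u i) (x i)) :
    ∀ i : Fin n, IsGreatest (Set.range (u i)) (dotp (u i) (x i)) := by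
  intro i
  obtain ⟨l, -, hl⟩ := exists_max_image univ (u i) ⟨i, mem_univ i⟩
  have hfav : ∀ j, u i j ≤ u i l := fun j => hl j (mem_univ j)
  have hdeviation : welfare u lam (update x i (Pi.single l 1)) ≤ welfare u lam x :=
    calc _ ≤ Wrelax u lam l := welfare_le_Wrelax u lam (hx.feasRelax_update_single i l)
      _ = Wval u lam := sub_eq_zero.mp (hp l)
      _ = welfare u lam x := Wval_eq_welfare hx hmax
  rw [welfare_update, dotp_single_one] at hdeviation
  have hge : u i l ≤ dotp (u i) (x i) :=
    sub_nonpos.mp (nonpos_of_mul_nonpos_right (by linarith) (hlam i))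
  have hle : dotp (u i) (x i) ≤ u i l := dotp_le_of_le hfav (hx.1 i) (hx.2.1 i)
  refine ⟨⟨l, le_antisymm hge hle⟩, ?_⟩
  rintro _ ⟨j, rfl⟩
  exact (hfav j).trans hge

/-- if all weights are positive and the VCG prices vanish, every
weighted-welfare-maximizing allocation gives each agent the utility of her
favorite good. -/
theorem zero_prices_imply_favorite_good {n : ℕ} (hn : 0 < n)
    (u : Fin n → Fin n → ℝ) (hu : ∀ i j, 0 ≤ u i j)
    (lam : Fin n → ℝ) (hlam : ∀ i, 0 < lam i)
    (hp : ∀ l : Fin n, vcg u lam l = 0)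
    (x : Fin n → Fin n → ℝ) (hx : IsAlloc x)
    (hmax : ∀ y, IsAlloc y →
      ∑ i, lam i * dotp (u i) (y i) ≤ ∑ i, lam i * dotp (u i) (x i)) :
    ∀ i : Fin n, IsGreatest (Set.range (u i)) (dotp (u i) (x i)) :=
  zero_prices_imply_favorite_good_general u lam hlam hp x hx hmax
end
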